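/- Let α ≥ 1, let n ∈ ℤ² with n ≠ 0, and let t > 0 satisfy t ⟨n⟩² ≥ 1. Then the partial sums S_N := ∑ ⟨n₁⟩^{−2(1−α)} ⟨n₂⟩^{−2(1−α)} e^{−2t⟨n⟩²} ∫₀^t e^{t₁(⟨n⟩² − ⟨n₁⟩² − ⟨n₂⟩²)} ∫₀^{t₁} e^{t₂(⟨n⟩² + ⟨n₁⟩² + ⟨n₂⟩²)} dt₂ dt₁, where the sum ranges over all n₁ ∈ ℤ² with |n₁| ≤ N, |n − n₁| ≤ N, n₁ ≠ n − n₁, n₁ ≠ −(n − n₁) and n₂ := n − n₁, are nonnegative, nondecreasing in N, and tend to +∞ as N → ∞. (This is the deterministic divergence underlying the negative part of Proposition 1.4(ii): the second-order stochastic object for the heat equation fails to be a spatial distribution for α ≥ 1.) -/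

import Mathlib

/-!
For `α ≥ 1` the weights `⟨n₁⟩^{2(α-1)} ⟨n₂⟩^{2(α-1)}` are at least `1`, and after computing the
inner time integral the double integral is at least `⟨n⟩² t² / (2 (⟨n⟩² + ⟨n₁⟩² + ⟨n₂⟩²))`.
By Peetre's inequality `⟨n - n₁⟩² ≤ 2 ⟨n⟩² ⟨n₁⟩²` every summand is then at least `c / ⟨n₁⟩²` with
`c > 0`, and `∑_{n₁ ∈ ℤ²} ⟨n₁⟩⁻²` diverges, since the `k`-th row already contributes about `1 / k`.
For `n ≠ 0` the conditions `n₁ ≠ ±n₂` exclude at most one point, and the truncation windows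
exhaust `ℤ²`, so the truncated sums tend to infinity.
-/

/-- Japanese bracket `⟨n⟩ = (1 + |n|²)^{1/2}` for `n ∈ ℤ²`. -/
noncomputable def jb2 (n : ℤ × ℤ) : ℝ :=
  Real.sqrt (1 + (n.1 : ℝ) ^ 2 + (n.2 : ℝ) ^ 2)

/-- Euclidean norm `|n|` for `n ∈ ℤ²`. -/
noncomputable def znorm2 (n : ℤ × ℤ) : ℝ :=
  Real.sqrt ((n.1 : ℝ) ^ 2 + (n.2 : ℝ) ^ 2)

/-- The summand in the heat second-order variance. -/
noncomputable def heatTerm (α : ℝ) (n n₁ : ℤ × ℤ) (t : ℝ) : ℝ :=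
  jb2 n₁ ^ (-(2 * (1 - α))) * jb2 (n - n₁) ^ (-(2 * (1 - α)))
    * Real.exp (-2 * t * jb2 n ^ 2)
    * ∫ t₁ in (0 : ℝ)..t,
        Real.exp (t₁ * (jb2 n ^ 2 - jb2 n₁ ^ 2 - jb2 (n - n₁) ^ 2)) *
          ∫ t₂ in (0 : ℝ)..t₁,
            Real.exp (t₂ * (jb2 n ^ 2 + jb2 n₁ ^ 2 + jb2 (n - n₁) ^ 2))

/-- Truncated sums `S_N` of the heat second-order variance. -/
noncomputable def SHeat2 (α : ℝ) (n : ℤ × ℤ) (t : ℝ) (N : ℕ) : ℝ :=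
  ∑' n₁ : ℤ × ℤ,
    Set.indicator
      {m : ℤ × ℤ | znorm2 m ≤ N ∧ znorm2 (n - m) ≤ N ∧ m ≠ n - m ∧ m ≠ -(n - m)}
      (fun m => heatTerm α n m t) n₁

open Real Set Filter

section IndicatorSums

variable {ι : Type*} {f : ι → ℝ} {s : ℕ → Set ι}

lemma summable_indicator_of_finite {t : Set ι} (ht : t.Finite) (f : ι → ℝ) :
    Summable (t.indicator f) :=
  summable_of_hasFiniteSupport (ht.subset (support_indicator_subset))

lemma Summable.of_indicator_of_finite_compl {t : Set ι} (h : Summable (t.indicator f))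
    (ht : tᶜ.Finite) : Summable f := by
  rw [← indicator_self_add_compl t f]
  exact h.add (summable_indicator_of_finite ht f)

lemma monotone_tsum_indicator (hf : 0 ≤ f) (hs : Monotone s) (hfin : ∀ N, (s N).Finite) :
    Monotone fun N => ∑' i, (s N).indicator f i := fun _ _ hNM =>
  Summable.tsum_le_tsum (indicator_le_indicator_of_subset (hs hNM) hf)
    (summable_indicator_of_finite (hfin _) f) (summable_indicator_of_finite (hfin _) f)

lemma tendsto_tsum_indicator_atTop (hf : 0 ≤ f) (hf' : ¬ Summable f) (hs : Monotone s)
    (hfin : ∀ N, (s N).Finite) (hcov : ∀ i, ∃ N, i ∈ s N) :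
    Tendsto (fun N => ∑' i, (s N).indicator f i) atTop atTop := by
  refine tendsto_atTop.2 fun B => ?_
  obtain ⟨u, hu⟩ : ∃ u : Finset ι, B < ∑ i ∈ u, f i := by
    by_contra! h
    exact hf' (summable_of_sum_le hf h)
  have hu_sub : ∀ᶠ N in atTop, ∀ i ∈ u, i ∈ s N :=
    (eventually_all_finset u).2 fun i _ =>
      let ⟨N, hN⟩ := hcov i
      eventually_atTop.2 ⟨N, fun _ hM => hs hM hN⟩
  filter_upwards [hu_sub] with N hN
  calc B ≤ ∑ i ∈ u, f i := hu.le
    _ = ∑ i ∈ u, (s N).indicator f i :=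
        Finset.sum_congr rfl fun i hi => (indicator_of_mem (hN i hi) f).symm
    _ ≤ ∑' i, (s N).indicator f i :=
        (summable_indicator_of_finite (hfin N) f).sum_le_tsum u
          fun i _ => indicator_nonneg (fun i _ => hf i) i

end IndicatorSums

lemma le_integral_exp_mul_integral_exp {a s t : ℝ} (ha : 0 < a) (hs : 0 ≤ s) (ht : 0 ≤ t) :
    a * t ^ 2 / (2 * (a + s)) ≤
      ∫ x in (0 : ℝ)..t, exp (x * (a - s)) * ∫ y in (0 : ℝ)..x, exp (y * (a + s)) := by
  have hpos : 0 < a + s := by linarith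
  have inner : ∀ x : ℝ,
      ∫ y in (0 : ℝ)..x, exp (y * (a + s)) = (exp (x * (a + s)) - 1) / (a + s) := by
    intro x
    rw [intervalIntegral.integral_comp_mul_right (fun y => exp y) hpos.ne', integral_exp]
    simp [div_eq_inv_mul]
  simp only [inner]
  have key : ∀ x ∈ Icc 0 t,
      a / (a + s) * x ≤ exp (x * (a - s)) * ((exp (x * (a + s)) - 1) / (a + s)) := by
    rintro x ⟨hx, -⟩
    -- `(a + s)` times the right side is `e^{2ax} - e^{x(a-s)} ≥ e^{ax} (e^{ax} - 1) ≥ ax`.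
    have hu : a * x + 1 ≤ exp (a * x) := add_one_le_exp _
    have hv : exp (x * (a - s)) ≤ exp (a * x) := exp_le_exp.2 (by nlinarith)
    have huv : exp (x * (a - s)) * exp (x * (a + s)) = exp (a * x) ^ 2 := by
      rw [← exp_add, sq, ← exp_add]; ring_nf
    rw [mul_div_assoc', div_mul_eq_mul_div, div_le_div_iff_of_pos_right hpos, mul_sub, huv]
    nlinarith [sq_nonneg (exp (a * x) - 1)]
  calc a * t ^ 2 / (2 * (a + s)) = ∫ x in (0 : ℝ)..t, a / (a + s) * x := by
        rw [intervalIntegral.integral_const_mul, integral_id]; field_simp; ring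
    _ ≤ _ := intervalIntegral.integral_mono_on ht
        ((by fun_prop : Continuous _).intervalIntegrable _ _)
        ((by fun_prop : Continuous _).intervalIntegrable _ _) key

lemma jb2_sq (m : ℤ × ℤ) : jb2 m ^ 2 = 1 + (m.1 : ℝ) ^ 2 + (m.2 : ℝ) ^ 2 :=
  sq_sqrt (by positivity)

lemma one_le_jb2 (m : ℤ × ℤ) : 1 ≤ jb2 m :=
  one_le_sqrt.2 (by nlinarith [sq_nonneg (m.1 : ℝ), sq_nonneg (m.2 : ℝ)])

lemma jb2_sub_sq_le (n m : ℤ × ℤ) : jb2 (n - m) ^ 2 ≤ 2 * jb2 n ^ 2 * jb2 m ^ 2 := by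
  simp only [jb2_sq, Prod.fst_sub, Prod.snd_sub, Int.cast_sub]
  nlinarith [sq_nonneg ((n.1 : ℝ) + m.1), sq_nonneg ((n.2 : ℝ) + m.2),
    mul_nonneg (add_nonneg (sq_nonneg (n.1 : ℝ)) (sq_nonneg (n.2 : ℝ)))
      (add_nonneg (sq_nonneg (m.1 : ℝ)) (sq_nonneg (m.2 : ℝ)))]

lemma exp_mul_le_heatTerm {α t : ℝ} (hα : 1 ≤ α) (ht : 0 ≤ t) (n m : ℤ × ℤ) :
    exp (-2 * t * jb2 n ^ 2) *
        (jb2 n ^ 2 * t ^ 2 / (2 * (jb2 n ^ 2 + jb2 m ^ 2 + jb2 (n - m) ^ 2)))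
      ≤ heatTerm α n m t := by
  have hw : ∀ k : ℤ × ℤ, 1 ≤ jb2 k ^ (-(2 * (1 - α))) :=
    fun k => one_le_rpow (one_le_jb2 k) (by linarith)
  have hI := le_integral_exp_mul_integral_exp (pow_pos (one_pos.trans_le (one_le_jb2 n)) 2)
    (by positivity : 0 ≤ jb2 m ^ 2 + jb2 (n - m) ^ 2) ht
  simp only [← sub_sub, ← add_assoc] at hI
  have hI₀ : 0 ≤ jb2 n ^ 2 * t ^ 2 / (2 * (jb2 n ^ 2 + jb2 m ^ 2 + jb2 (n - m) ^ 2)) := by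
    positivity
  rw [heatTerm]
  set I := ∫ x in (0 : ℝ)..t, exp (x * (jb2 n ^ 2 - jb2 m ^ 2 - jb2 (n - m) ^ 2)) *
    ∫ y in (0 : ℝ)..x, exp (y * (jb2 n ^ 2 + jb2 m ^ 2 + jb2 (n - m) ^ 2))
  have hI' : 0 ≤ I := hI₀.trans hI
  calc _ ≤ exp (-2 * t * jb2 n ^ 2) * I := by gcongr
    _ = 1 * 1 * exp (-2 * t * jb2 n ^ 2) * I := by ring
    _ ≤ _ := by gcongr <;> linarith [hw m, hw (n - m)]

lemma exists_pos_div_jb2_sq_le_heatTerm {α t : ℝ} (hα : 1 ≤ α) (ht : 0 < t) (n : ℤ × ℤ) :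
    ∃ c > 0, ∀ m, c / jb2 m ^ 2 ≤ heatTerm α n m t := by
  set a := jb2 n ^ 2
  have ha : 1 ≤ a := one_le_pow₀ (one_le_jb2 n)
  refine ⟨exp (-2 * t * a) * (a * t ^ 2 / (2 * (3 * a + 1))), by positivity, fun m => ?_⟩
  have hb : 1 ≤ jb2 m ^ 2 := one_le_pow₀ (one_le_jb2 m)
  have hden : a + jb2 m ^ 2 + jb2 (n - m) ^ 2 ≤ (3 * a + 1) * jb2 m ^ 2 := by
    nlinarith [jb2_sub_sq_le n m]
  calc _ = exp (-2 * t * a) * (a * t ^ 2 / (2 * ((3 * a + 1) * jb2 m ^ 2))) := by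
        field_simp
    _ ≤ exp (-2 * t * a) * (a * t ^ 2 / (2 * (a + jb2 m ^ 2 + jb2 (n - m) ^ 2))) := by
        gcongr
    _ ≤ heatTerm α n m t := exp_mul_le_heatTerm hα ht.le n m

lemma inv_two_mul_succ_le_tsum_inv_jb2_sq (k : ℕ)
    (hk : Summable fun j : ℕ => (jb2 ((k : ℤ), (j : ℤ)) ^ 2)⁻¹) :
    1 / (2 * ((k : ℝ) + 1)) ≤ ∑' j : ℕ, (jb2 ((k : ℤ), (j : ℤ)) ^ 2)⁻¹ := by
  have hrow : ∀ j ∈ Finset.range (k + 1),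
      (1 + 2 * (k : ℝ) ^ 2)⁻¹ ≤ (jb2 ((k : ℤ), (j : ℤ)) ^ 2)⁻¹ := by
    intro j hj
    have hjk : (j : ℝ) ≤ k := by exact_mod_cast Nat.lt_succ_iff.1 (Finset.mem_range.1 hj)
    rw [jb2_sq]
    apply inv_anti₀ (by positivity)
    push_cast
    nlinarith
  calc 1 / (2 * ((k : ℝ) + 1)) ≤ ((k : ℝ) + 1) * (1 + 2 * (k : ℝ) ^ 2)⁻¹ := by
        rw [div_le_iff₀ (by positivity)]
        field_simp
        nlinarith [(Nat.cast_nonneg k : (0 : ℝ) ≤ k)]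
    _ = ∑ j ∈ Finset.range (k + 1), (1 + 2 * (k : ℝ) ^ 2)⁻¹ := by simp
    _ ≤ ∑ j ∈ Finset.range (k + 1), (jb2 ((k : ℤ), (j : ℤ)) ^ 2)⁻¹ := Finset.sum_le_sum hrow
    _ ≤ _ := hk.sum_le_tsum _ fun j _ => by positivity

lemma not_summable_inv_jb2_sq : ¬ Summable fun m : ℤ × ℤ => (jb2 m ^ 2)⁻¹ := by
  intro h
  have hℕ : Summable fun p : ℕ × ℕ => (jb2 ((p.1 : ℤ), (p.2 : ℤ)) ^ 2)⁻¹ :=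
    h.comp_injective (i := fun p : ℕ × ℕ => ((p.1 : ℤ), (p.2 : ℤ)))
      fun p q hpq => by simpa [Prod.ext_iff] using hpq
  refine Real.not_summable_one_div_natCast ((summable_nat_add_iff 1).1 ?_)
  refine (hℕ.prod.mul_left 2).of_nonneg_of_le (fun k => by positivity) fun k => ?_
  have := inv_two_mul_succ_le_tsum_inv_jb2_sq k (hℕ.prod_factor k)
  rw [div_le_iff₀ (by positivity)] at this
  push_cast
  rw [div_le_iff₀ (by positivity)]
  linarith

def heatTruncation (n : ℤ × ℤ) (N : ℕ) : Set (ℤ × ℤ) :=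
  {m | znorm2 m ≤ N ∧ znorm2 (n - m) ≤ N}

def unpairedFreq (n : ℤ × ℤ) : Set (ℤ × ℤ) :=
  {m | m ≠ n - m ∧ m ≠ -(n - m)}

lemma SHeat2_eq_tsum_indicator (α : ℝ) (n : ℤ × ℤ) (t : ℝ) (N : ℕ) :
    SHeat2 α n t N =
      ∑' m, (heatTruncation n N).indicator ((unpairedFreq n).indicator (heatTerm α n · t)) m := by
  have hset : heatTruncation n N ∩ unpairedFreq n =
      {m | znorm2 m ≤ N ∧ znorm2 (n - m) ≤ N ∧ m ≠ n - m ∧ m ≠ -(n - m)} := by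
    ext m
    simp only [heatTruncation, unpairedFreq, mem_inter_iff, mem_ofPred_eq, and_assoc]
  rw [indicator_indicator, hset, SHeat2]

lemma monotone_heatTruncation (n : ℤ × ℤ) : Monotone (heatTruncation n) :=
  fun _ _ hNM _ ⟨h₁, h₂⟩ =>
    ⟨h₁.trans (Nat.cast_le.2 hNM), h₂.trans (Nat.cast_le.2 hNM)⟩

lemma finite_heatTruncation (n : ℤ × ℤ) (N : ℕ) : (heatTruncation n N).Finite := by
  refine (Set.finite_Icc (-(N : ℤ), -(N : ℤ)) ((N : ℤ), (N : ℤ))).subset ?_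
  rintro m ⟨hm, -⟩
  have h₁ : |(m.1 : ℝ)| ≤ N := (abs_le_sqrt (by nlinarith [sq_nonneg (m.2 : ℝ)])).trans hm
  have h₂ : |(m.2 : ℝ)| ≤ N := (abs_le_sqrt (by nlinarith [sq_nonneg (m.1 : ℝ)])).trans hm
  rw [abs_le] at h₁ h₂
  exact ⟨⟨by exact_mod_cast h₁.1, by exact_mod_cast h₂.1⟩,
    ⟨by exact_mod_cast h₁.2, by exact_mod_cast h₂.2⟩⟩

lemma exists_mem_heatTruncation (n m : ℤ × ℤ) : ∃ N, m ∈ heatTruncation n N := by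
  obtain ⟨N, hN⟩ := exists_nat_ge (max (znorm2 m) (znorm2 (n - m)))
  exact ⟨N, (le_max_left _ _).trans hN, (le_max_right _ _).trans hN⟩

lemma finite_compl_unpairedFreq {n : ℤ × ℤ} (hn : n ≠ 0) : (unpairedFreq n)ᶜ.Finite := by
  refine Set.Subsingleton.finite fun m hm m' hm' => ?_
  obtain ⟨n₁, n₂⟩ := n
  obtain ⟨a, b⟩ := m
  obtain ⟨a', b'⟩ := m'
  simp only [unpairedFreq, mem_compl_iff, mem_ofPred_eq, ne_eq, Prod.ext_iff, Prod.fst_sub,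
    Prod.snd_sub, Prod.fst_neg, Prod.snd_neg, Prod.fst_zero, Prod.snd_zero] at hm hm' hn ⊢
  omega

lemma not_summable_indicator_heatTerm {α t : ℝ} (hα : 1 ≤ α) (ht : 0 < t) {n : ℤ × ℤ}
    (hn : n ≠ 0) : ¬ Summable ((unpairedFreq n).indicator (heatTerm α n · t)) := by
  obtain ⟨c, hc, hle⟩ := exists_pos_div_jb2_sq_le_heatTerm hα ht n
  intro h
  have hc' : Summable ((unpairedFreq n).indicator fun m => c / jb2 m ^ 2) :=
    h.of_nonneg_of_le (fun m => indicator_nonneg (fun m _ => by positivity) m)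
      fun m => indicator_le_indicator (hle m)
  refine not_summable_inv_jb2_sq ?_
  simpa [div_eq_mul_inv, inv_mul_cancel_left₀ hc.ne'] using
    ((hc'.of_indicator_of_finite_compl (finite_compl_unpairedFreq hn)).mul_left c⁻¹)

theorem stmt7_general (α : ℝ) (hα : 1 ≤ α) (n : ℤ × ℤ) (hn : n ≠ 0) (t : ℝ) (ht : 0 < t) :
    (∀ N : ℕ, 0 ≤ SHeat2 α n t N) ∧
    Monotone (fun N : ℕ => SHeat2 α n t N) ∧
    Filter.Tendsto (fun N : ℕ => SHeat2 α n t N) Filter.atTop Filter.atTop := by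
  have hf : 0 ≤ (unpairedFreq n).indicator (heatTerm α n · t) :=
    indicator_nonneg fun m _ => (exp_mul_le_heatTerm hα ht.le n m).trans' (by positivity)
  simp only [SHeat2_eq_tsum_indicator]
  exact ⟨fun N => tsum_nonneg (indicator_nonneg fun m _ => hf m),
    monotone_tsum_indicator hf (monotone_heatTruncation n) (finite_heatTruncation n),
    tendsto_tsum_indicator_atTop hf (not_summable_indicator_heatTerm hα ht hn)
      (monotone_heatTruncation n) (finite_heatTruncation n) (exists_mem_heatTruncation n)⟩

/-- Divergence underlying the negative part of Proposition 1.4(ii): the second-order heat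
object fails to be a spatial distribution for `α ≥ 1`. -/
theorem stmt7 (α : ℝ) (hα : 1 ≤ α) (n : ℤ × ℤ) (hn : n ≠ 0) (t : ℝ) (ht : 0 < t)
    (htn : 1 ≤ t * jb2 n ^ 2) :
    (∀ N : ℕ, 0 ≤ SHeat2 α n t N) ∧
    Monotone (fun N : ℕ => SHeat2 α n t N) ∧
    Filter.Tendsto (fun N : ℕ => SHeat2 α n t N) Filter.atTop Filter.atTop :=
  stmt7_general α hα n hn t ht
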